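/- Let q̃ be the fractional perfect matching in the augmented graph defined as the average of the (augmented) incidence vectors of all μ matchings in G. Define edge weights wt*(u,v) = vote_u(v, q̃) + vote_v(u, q̃) for edges and wt*(u,u) = q̃_{(u,u)} − 1 for self-loops. Then for every matching M in G, wt*(M̃) = wt-score(M), where M̃ = M ∪ {(u,u) : u unmatched in M}. Consequently M is a weighted Copeland winner if and only if M̃ is a maximum-weight perfect matching in the augmented graph under wt*. -/
import Mathlib


open Finset

/-- Popularity margin Δ(M,N) of matching M versus matching N, where matchings
are involutions of the self-loop augmented vertex set and `rk u` gives u's weak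
ranking (lower = better, being matched to oneself = bottom-most choice). -/
def delta13 {V : Type*} [Fintype V] (rk : V → V → ℕ) (M N : V → V) : ℝ :=
  ∑ u, (if rk u (M u) < rk u (N u) then (1 : ℝ)
    else if rk u (N u) < rk u (M u) then -1 else 0)

/-- Fractional vote of u for partner v against the fractional matching x. -/
def vote13 {V : Type*} [Fintype V] [DecidableEq V] (rk : V → V → ℕ)
    (u v : V) (x : V → V → ℝ) : ℝ :=
  (∑ v' ∈ univ.filter fun v' => rk u v < rk u v', x u v')
    - (∑ v' ∈ univ.filter fun v' => rk u v' < rk u v, x u v')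

/-- The fractional perfect matching q̃: the average of the (augmented)
incidence vectors of all matchings in ℳ. -/
noncomputable def q13 {V : Type*} [Fintype V] [DecidableEq V] (ℳ : Finset (V → V))
    (u v : V) : ℝ :=
  (∑ N ∈ ℳ, if N u = v then (1 : ℝ) else 0) / (ℳ.card : ℝ)

/-- The weight wt*(u,v) = vote_u(v,q̃) + vote_v(u,q̃) of a non-loop edge. -/
noncomputable def wtstar13 {V : Type*} [Fintype V] [DecidableEq V] (rk : V → V → ℕ)
    (ℳ : Finset (V → V)) (u v : V) : ℝ :=
  vote13 rk u v (q13 ℳ) + vote13 rk v u (q13 ℳ)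

/-- wt*-weight of the augmented matching M̃: self-loops (u,u) have weight
q̃_{(u,u)} − 1 and every matched pair is counted once. -/
noncomputable def wtM13 {V : Type*} [Fintype V] [DecidableEq V] (rk : V → V → ℕ)
    (ℳ : Finset (V → V)) (M : V → V) : ℝ :=
  (∑ u ∈ univ.filter fun u => M u = u, (q13 ℳ u u - 1))
    + (1 / 2) * ∑ u ∈ univ.filter fun u => M u ≠ u, wtstar13 rk ℳ u (M u)

lemma vote_q_eq13 {V : Type*} [Fintype V] [DecidableEq V] (rk : V → V → ℕ)
    (ℳ : Finset (V → V)) (u w : V) :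
    vote13 rk u w (q13 ℳ) =
      (∑ N ∈ ℳ, (if rk u w < rk u (N u) then (1 : ℝ)
        else if rk u (N u) < rk u w then -1 else 0)) / (ℳ.card : ℝ) := by
  unfold vote13 q13
  rw [← Finset.sum_div, ← Finset.sum_div, ← sub_div]
  congr 1
  rw [Finset.sum_comm, Finset.sum_comm (s := univ.filter fun v' => rk u v' < rk u w),
    ← Finset.sum_sub_distrib]
  refine Finset.sum_congr rfl fun N _ => ?_
  rw [Finset.sum_ite_eq, Finset.sum_ite_eq]
  simp only [Finset.mem_filter, Finset.mem_univ, true_and]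
  split_ifs <;> first | (exfalso; omega) | norm_num

/-- The wt*-weight of M̃ equals the weighted Copeland score of M; hence M is a
weighted Copeland winner iff M̃ is a maximum-weight perfect matching in the
augmented graph under wt*. -/
theorem stmt_13 {V : Type*} [Fintype V] [DecidableEq V] (rk : V → V → ℕ)
    (hrk : ∀ u v : V, v ≠ u → rk u v < rk u u)
    (ℳ : Finset (V → V)) (hne : ℳ.Nonempty)
    (hinv : ∀ N ∈ ℳ, ∀ u, N (N u) = u) :
    (∀ M ∈ ℳ, wtM13 rk ℳ M = (∑ N ∈ ℳ, delta13 rk M N) / (ℳ.card : ℝ)) ∧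
    (∀ M ∈ ℳ,
      ((∀ N ∈ ℳ, (∑ N' ∈ ℳ, delta13 rk N N') / (ℳ.card : ℝ)
          ≤ (∑ N' ∈ ℳ, delta13 rk M N') / (ℳ.card : ℝ)) ↔
        (∀ N ∈ ℳ, wtM13 rk ℳ N ≤ wtM13 rk ℳ M))) := by
  have hc : (ℳ.card : ℝ) ≠ 0 := by
    have := Finset.card_pos.mpr hne
    positivity
  have hq : ∀ u : V, ∑ v, q13 ℳ u v = 1 := by
    intro u
    unfold q13
    rw [← Finset.sum_div, Finset.sum_comm]
    simp only [Finset.sum_ite_eq, Finset.mem_univ, if_true, Finset.sum_const,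
      nsmul_eq_mul, mul_one]
    exact div_self hc
  have hself : ∀ u : V, vote13 rk u u (q13 ℳ) = q13 ℳ u u - 1 := by
    intro u
    unfold vote13
    have h1 : (univ.filter fun v' => rk u u < rk u v') = ∅ := by
      ext v
      simp only [Finset.mem_filter, Finset.mem_univ, true_and, Finset.notMem_empty,
        iff_false, not_lt]
      rcases eq_or_ne v u with rfl | h
      · exact le_refl _
      · exact (hrk u v h).le
    have h2 : (univ.filter fun v' => rk u v' < rk u u) = univ.filter fun v' => v' ≠ u := by
      ext v
      simp only [Finset.mem_filter, Finset.mem_univ, true_and]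
      constructor
      · intro h
        rintro rfl; omega
      · intro h; exact hrk u v h
    rw [h1, h2, Finset.sum_empty]
    have h3 := hq u
    rw [← Finset.sum_filter_add_sum_filter_not univ (fun v' => v' ≠ u)] at h3
    have h4 : ∑ v' ∈ univ.filter (fun v' => ¬ v' ≠ u), q13 ℳ u v' = q13 ℳ u u := by
      simp only [not_ne_iff, Finset.sum_filter, Finset.sum_ite_eq', Finset.mem_univ, if_true]
    rw [h4] at h3
    linarith
  have key : ∀ M ∈ ℳ, wtM13 rk ℳ M = (∑ N ∈ ℳ, delta13 rk M N) / (ℳ.card : ℝ) := by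
    intro M hM
    have hMinv : ∀ u, M (M u) = u := hinv M hM
    have hpair : ∑ u ∈ univ.filter (fun u => M u ≠ u), vote13 rk (M u) u (q13 ℳ)
        = ∑ u ∈ univ.filter (fun u => M u ≠ u), vote13 rk u (M u) (q13 ℳ) := by
      refine Finset.sum_nbij' (i := fun u => M u) (j := fun u => M u) ?_ ?_ ?_ ?_ ?_
      · intro a ha
        simp only [Finset.mem_filter, Finset.mem_univ, true_and] at ha ⊢
        rw [hMinv]
        exact fun h => ha h.symm
      · intro a ha
        simp only [Finset.mem_filter, Finset.mem_univ, true_and] at ha ⊢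
        rw [hMinv]
        exact fun h => ha h.symm
      · intro a _; exact hMinv a
      · intro a _; exact hMinv a
      · intro a _
        rw [hMinv]
    have hrhs : (∑ N ∈ ℳ, delta13 rk M N) / (ℳ.card : ℝ)
        = ∑ u, vote13 rk u (M u) (q13 ℳ) := by
      unfold delta13
      rw [Finset.sum_comm, Finset.sum_div]
      refine Finset.sum_congr rfl fun u _ => ?_
      exact (vote_q_eq13 rk ℳ u (M u)).symm
    rw [hrhs]
    unfold wtM13 wtstar13
    set T := ∑ u ∈ univ.filter (fun u => M u ≠ u), vote13 rk u (M u) (q13 ℳ) with hT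
    rw [Finset.sum_add_distrib, hpair]
    have h2T : (1 / 2 : ℝ) * (T + T) = T := by ring
    rw [h2T,
      ← Finset.sum_filter_add_sum_filter_not univ (fun u => M u = u)
        (fun u => vote13 rk u (M u) (q13 ℳ))]
    congr 1
    refine Finset.sum_congr rfl fun u hu => ?_
    simp only [Finset.mem_filter, Finset.mem_univ, true_and] at hu
    rw [hu]
    exact (hself u).symm
  refine ⟨key, fun M hM => ?_⟩
  constructor
  · intro h N hN
    rw [key N hN, key M hM]
    exact h N hN
  · intro h N hN
    rw [← key N hN, ← key M hM]
    exact h N hN
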